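/- arXiv:1508.01829 — 2 statements merged into one kernel-verified Lean document; each statement's English description precedes it below -/
import Mathlib

section
/- Let m, g, K_cr, V, λ_V, λ_h and the values c, c_V, c_h, W, K_des, K_desV, K_desh, D̃, D̃_V, D̃_h, W_χ, W_χV be real numbers with m ≠ 0, V ≠ 0, D̃ ≠ 0, λ_V ≠ 0. Assume: (i) g + V·W_χ = (λ_h/λ_V)·V; (ii) λ_V/m = (−K_cr·(c·V + W) + K_des)/D̃; and (iii) K_cr·(−(c + c_V·V)·(λ_h/λ_V)·V + c_h·V² + V·W_χ) + K_desV·(λ_h/λ_V)·V − K_desh·V + (λ_V/m)·(D̃·(W_χ + W_χV) + D̃_h·V) − (λ_h/m)·(D̃_V·V + D̃) = 0. Then Γ_s = 0, where Γ_s := (K_cr·(c·V + W) − K_des)·(V·D̃_h − D̃_V·(g + V·W_χ) + D̃·W_χV) − D̃·K_cr·(c·g + (W/V)·g − (c + c_V·V)·(g + V·W_χ) + c_h·V² + V·W_χ) − D̃·(−(K_des/V)·g + K_desV·(g + V·W_χ) − K_desh·V). -/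
/-!
On a singular arc the three costate expressions occurring in `Ḣ_γ` are all determined by the
state: `H_γ = 0` gives `λ_h / λ_V = (g + V W_χ) / V`, the vanishing Hamiltonian gives
`λ_V D̃ / m = -(K_cr (c V + W) - K_des)`, and `λ_h / m` is the product of the two ratios.
Substituting them into `Ḣ_γ = 0` and clearing the denominator `V` leaves
`Γ_s = -D̃ Ḣ_γ = 0`.
-/

/-- The aircraft, cost and wind data at a point `(V, h)`; `Dt` stands for `D̃ = D - T`. -/
structure ArcPoint where
  g : ℝ
  Kcr : ℝ
  V : ℝ
  c : ℝ
  cV : ℝ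
  ch : ℝ
  W : ℝ
  Kdes : ℝ
  KdesV : ℝ
  Kdesh : ℝ
  Dt : ℝ
  DtV : ℝ
  Dth : ℝ
  Wchi : ℝ
  WchiV : ℝ

namespace ArcPoint

variable (p : ArcPoint)

noncomputable def singularArcFunction : ℝ :=
  (p.Kcr * (p.c * p.V + p.W) - p.Kdes)
      * (p.V * p.Dth - p.DtV * (p.g + p.V * p.Wchi) + p.Dt * p.WchiV)
    - p.Dt * (p.Kcr * (p.c * p.g + (p.W / p.V) * p.g - (p.c + p.cV * p.V) * (p.g + p.V * p.Wchi)
        + p.ch * p.V ^ 2 + p.V * p.Wchi))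
    - p.Dt * (-(p.Kdes / p.V) * p.g + p.KdesV * (p.g + p.V * p.Wchi) - p.Kdesh * p.V)

/-- `Ḣ_γ` (Eq. 41), with `A`, `Λ`, `Λh` standing for `λ_h / λ_V`, `λ_V / m`, `λ_h / m`. -/
def switchingRate (A Λ Λh : ℝ) : ℝ :=
  p.Kcr * (-(p.c + p.cV * p.V) * A * p.V + p.ch * p.V ^ 2 + p.V * p.Wchi)
    + p.KdesV * A * p.V - p.Kdesh * p.V
    + Λ * (p.Dt * (p.Wchi + p.WchiV) + p.Dth * p.V)
    - Λh * (p.DtV * p.V + p.Dt)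

theorem singularArcFunction_eq_neg_mul_switchingRate (hV : p.V ≠ 0) {A Λ : ℝ}
    (hA : A * p.V = p.g + p.V * p.Wchi)
    (hΛ : Λ * p.Dt = -(p.Kcr * (p.c * p.V + p.W) - p.Kdes)) :
    p.singularArcFunction = -p.Dt * p.switchingRate A Λ (Λ * A) := by
  obtain rfl : A = (p.g + p.V * p.Wchi) / p.V := by rw [← hA, mul_div_cancel_right₀ _ hV]
  unfold singularArcFunction switchingRate
  field_simp
  linear_combination (p.V * (p.Dt * (p.Wchi + p.WchiV) + p.Dth * p.V)
    - (p.g + p.V * p.Wchi) * (p.DtV * p.V + p.Dt)) * hΛ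

end ArcPoint

theorem singular_arc_equation_general
    (m g Kcr V lamV lamh c cV ch W Kdes KdesV Kdesh Dt DtV Dth Wchi WchiV : ℝ)
    (hV : V ≠ 0) (hD : Dt ≠ 0) (hlV : lamV ≠ 0)
    (h1 : g + V * Wchi = (lamh / lamV) * V)
    (h2 : lamV / m = (-Kcr * (c * V + W) + Kdes) / Dt)
    (h3 : Kcr * (-(c + cV * V) * (lamh / lamV) * V + ch * V ^ 2 + V * Wchi)
          + KdesV * (lamh / lamV) * V - Kdesh * V
          + (lamV / m) * (Dt * (Wchi + WchiV) + Dth * V)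
          - (lamh / m) * (DtV * V + Dt) = 0) :
    (Kcr * (c * V + W) - Kdes) * (V * Dth - DtV * (g + V * Wchi) + Dt * WchiV)
      - Dt * (Kcr * (c * g + (W / V) * g - (c + cV * V) * (g + V * Wchi)
              + ch * V ^ 2 + V * Wchi))
      - Dt * (-(Kdes / V) * g + KdesV * (g + V * Wchi) - Kdesh * V) = 0 := by
  let p : ArcPoint := ⟨g, Kcr, V, c, cV, ch, W, Kdes, KdesV, Kdesh, Dt, DtV, Dth, Wchi, WchiV⟩
  have hΛ : lamV / m * Dt = -(Kcr * (c * V + W) - Kdes) := by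
    rw [h2, div_mul_cancel₀ _ hD]; ring
  have hΛh : lamV / m * (lamh / lamV) = lamh / m := by
    rw [div_mul_div_comm, mul_comm m, mul_div_mul_left _ _ hlV]
  have key := p.singularArcFunction_eq_neg_mul_switchingRate hV h1.symm hΛ
  rw [hΛh] at key
  change p.singularArcFunction = 0
  rw [key, show p.switchingRate _ _ _ = 0 from h3, mul_zero]

/-- Eq. (44): the singular arc equation `Γ_s(V, h) = 0` follows from the singular
condition `H_γ = 0` (Eq. 40), the vanishing-Hamiltonian relation (Eq. 42/43), and
`Ḣ_γ = 0` (Eq. 41). -/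
theorem singular_arc_equation
    (m g Kcr V lamV lamh c cV ch W Kdes KdesV Kdesh Dt DtV Dth Wchi WchiV : ℝ)
    (hm : m ≠ 0) (hV : V ≠ 0) (hD : Dt ≠ 0) (hlV : lamV ≠ 0)
    (h1 : g + V * Wchi = (lamh / lamV) * V)
    (h2 : lamV / m = (-Kcr * (c * V + W) + Kdes) / Dt)
    (h3 : Kcr * (-(c + cV * V) * (lamh / lamV) * V + ch * V ^ 2 + V * Wchi)
          + KdesV * (lamh / lamV) * V - Kdesh * V
          + (lamV / m) * (Dt * (Wchi + WchiV) + Dth * V)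
          - (lamh / m) * (DtV * V + Dt) = 0) :
    (Kcr * (c * V + W) - Kdes) * (V * Dth - DtV * (g + V * Wchi) + Dt * WchiV)
      - Dt * (Kcr * (c * g + (W / V) * g - (c + cV * V) * (g + V * Wchi)
              + ch * V ^ 2 + V * Wchi))
      - Dt * (-(Kdes / V) * g + KdesV * (g + V * Wchi) - Kdesh * V) = 0 :=
  singular_arc_equation_general m g Kcr V lamV lamh c cV ch W Kdes KdesV Kdesh Dt DtV Dth Wchi WchiV
    hV hD hlV h1 h2 h3
end

section
/- Let S : ℝ × ℝ → ℝ be differentiable at (V₀, h₀) with partial derivatives S_V and S_h there, let m ≠ 0, g, D̃, W_χ, γ be reals, and let V, h : ℝ → ℝ be differentiable at t₁ with V(t₁) = V₀, h(t₁) = h₀, V'(t₁) = −D̃/m − (g + V₀·W_χ)·γ, and h'(t₁) = V₀·γ. Suppose the function t ↦ S(V(t), h(t)) has derivative 0 at t₁, and suppose S_V·(g + V₀·W_χ) − S_h·V₀ ≠ 0. Then γ = −(S_V·(g + V₀·W_χ) − S_h·V₀)⁻¹ · S_V · (D̃/m). -/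
/-! Along the boundary arc the chain rule turns `Ṡ = 0` into
`S_V · V̇ + S_h · ḣ = 0`; inserting the dynamics makes this an affine equation in `γ`
whose leading coefficient is `-(S_V·(g + V·W_χ) − S_h·V)`, so it can be solved for `γ`. -/

theorem ContinuousLinearMap.apply_prod_eq (L : ℝ × ℝ →L[ℝ] ℝ) (a b : ℝ) :
    L (a, b) = L (1, 0) * a + L (0, 1) * b := by
  have hab : ((a, b) : ℝ × ℝ) = a • ((1 : ℝ), (0 : ℝ)) + b • ((0 : ℝ), (1 : ℝ)) := by
    simp
  rw [hab, map_add, map_smul, map_smul, smul_eq_mul, smul_eq_mul, mul_comm a, mul_comm b]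

theorem HasFDerivAt.partials_combination_eq_zero {S : ℝ × ℝ → ℝ} {L : ℝ × ℝ →L[ℝ] ℝ}
    {x y : ℝ → ℝ} {x' y' t : ℝ} (hS : HasFDerivAt S L (x t, y t))
    (hx : HasDerivAt x x' t) (hy : HasDerivAt y y' t)
    (hSdot : HasDerivAt (fun s => S (x s, y s)) 0 t) :
    L (1, 0) * x' + L (0, 1) * y' = 0 := by
  rw [← L.apply_prod_eq]
  exact (hS.comp_hasDerivAt t (hx.prodMk hy)).unique hSdot

theorem eq_neg_inv_mul_of_affine_eq_zero {a b c v k γ : ℝ} (hne : a * c - b * v ≠ 0)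
    (h : a * (-k - c * γ) + b * (v * γ) = 0) :
    γ = -(a * c - b * v)⁻¹ * a * k := by
  field_simp
  linear_combination -h

theorem boundary_arc_control_general
    (S : ℝ × ℝ → ℝ) (L : ℝ × ℝ →L[ℝ] ℝ) (V₀ h₀ : ℝ)
    (hS : HasFDerivAt S L (V₀, h₀))
    (m g Dt Wchi γ : ℝ)
    (V h : ℝ → ℝ) (t₁ : ℝ)
    (hV0 : V t₁ = V₀) (hh0 : h t₁ = h₀)
    (hV : HasDerivAt V (-Dt / m - (g + V₀ * Wchi) * γ) t₁)
    (hh : HasDerivAt h (V₀ * γ) t₁)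
    (hSdot : HasDerivAt (fun t => S (V t, h t)) 0 t₁)
    (hne : L (1, 0) * (g + V₀ * Wchi) - L (0, 1) * V₀ ≠ 0) :
    γ = -(L (1, 0) * (g + V₀ * Wchi) - L (0, 1) * V₀)⁻¹ * L (1, 0) * (Dt / m) := by
  rw [← hV0, ← hh0] at hS
  have hSdot_eq := hS.partials_combination_eq_zero hV hh hSdot
  rw [neg_div] at hSdot_eq
  exact eq_neg_inv_mul_of_affine_eq_zero hne hSdot_eq

/-- Eq. (47): the boundary-arc feedback control law. Along an active first-order pure
state constraint `S(V, h) = 0`, the vanishing of `Ṡ` determines the flight path angle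
`γ = −[S_V·(g + V·W_χ) − S_h·V]⁻¹ · S_V · D̃/m`. -/
theorem boundary_arc_control
    (S : ℝ × ℝ → ℝ) (L : ℝ × ℝ →L[ℝ] ℝ) (V₀ h₀ : ℝ)
    (hS : HasFDerivAt S L (V₀, h₀))
    (m g Dt Wchi γ : ℝ) (hm : m ≠ 0)
    (V h : ℝ → ℝ) (t₁ : ℝ)
    (hV0 : V t₁ = V₀) (hh0 : h t₁ = h₀)
    (hV : HasDerivAt V (-Dt / m - (g + V₀ * Wchi) * γ) t₁)
    (hh : HasDerivAt h (V₀ * γ) t₁)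
    (hSdot : HasDerivAt (fun t => S (V t, h t)) 0 t₁)
    (hne : L (1, 0) * (g + V₀ * Wchi) - L (0, 1) * V₀ ≠ 0) :
    γ = -(L (1, 0) * (g + V₀ * Wchi) - L (0, 1) * V₀)⁻¹ * L (1, 0) * (Dt / m) :=
  boundary_arc_control_general S L V₀ h₀ hS m g Dt Wchi γ V h t₁ hV0 hh0 hV hh hSdot hne
end
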